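/- arXiv:1905.05629 — 2 statements merged into one kernel-verified Lean document; each statement's English description precedes it below -/
import Mathlib

section
/- The holomorphic vector field X = (1-ζ)∂/∂z + 2iz ∂/∂w is an infinitesimal automorphism of the model hypersurface {Im w = P(z,ζ,\bar z,\bar ζ)}: the real part of X applied to the defining function ρ = Im w − P vanishes identically on the hypersurface. Equivalently, Re( i·(2iz)/(2i) − (1-ζ) P_z ) restricted to {v = P} vanishes, i.e., Re( z − (1-ζ)P_z ) = 0 identically in (z,ζ,\bar z,\bar ζ). -/
open Complex

noncomputable def P4 (z ζ zb ζb : ℂ) : ℂ :=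
  (z * zb + (z ^ 2 * ζb + zb ^ 2 * ζ) / 2) / (1 - ζ * ζb)

/-- The formal partial derivative of `P` in `z`. -/
noncomputable def Pz (z ζ zb ζb : ℂ) : ℂ :=
  deriv (fun s => P4 s ζ zb ζb) z

/-!
On the real slice `zb = z̄, ζb = ζ̄` one has `P_z = (z̄ + z ζ̄) / (1 - |ζ|²)` with a real
denominator, and `Re((1 - ζ)(z̄ + z ζ̄)) = (1 - |ζ|²) Re z` because `z ζ̄ - ζ z̄` is purely
imaginary. Hence `Re((1 - ζ) P_z) = Re z`.
-/

open ComplexConjugate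

lemma hasDerivAt_P4 (z ζ zb ζb : ℂ) :
    HasDerivAt (fun s => P4 s ζ zb ζb) ((zb + z * ζb) / (1 - ζ * ζb)) z := by
  have h := (((hasDerivAt_id z).mul_const zb).add
    ((((hasDerivAt_pow 2 z).mul_const ζb).add_const (zb ^ 2 * ζ)).div_const 2)).div_const
    (1 - ζ * ζb)
  exact h.congr_deriv (by norm_num; ring)

lemma Pz_eq (z ζ zb ζb : ℂ) : Pz z ζ zb ζb = (zb + z * ζb) / (1 - ζ * ζb) :=
  (hasDerivAt_P4 z ζ zb ζb).deriv

lemma re_one_sub_mul_conj_add_mul_conj (z ζ : ℂ) :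
    ((1 - ζ) * (conj z + z * conj ζ)).re = (1 - normSq ζ) * z.re := by
  simp only [mul_re, mul_im, sub_re, sub_im, add_re, add_im, one_re, one_im, conj_re, conj_im,
    normSq_apply]
  ring

lemma re_one_sub_mul_Pz (z ζ : ℂ) (hζ : normSq ζ ≠ 1) :
    ((1 - ζ) * Pz z ζ (conj z) (conj ζ)).re = z.re := by
  have hden : (1 : ℝ) - normSq ζ ≠ 0 := sub_ne_zero.mpr (Ne.symm hζ)
  have hden_ofReal : 1 - ζ * conj ζ = ((1 - normSq ζ : ℝ) : ℂ) := by
    rw [mul_conj, ofReal_sub, ofReal_one]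
  rw [Pz_eq, hden_ofReal, ← mul_div_assoc, div_ofReal_re,
    re_one_sub_mul_conj_add_mul_conj, mul_div_cancel_left₀ _ hden]

/-- the field `X = (1-ζ)∂/∂z + 2iz ∂/∂w` is an infinitesimal
automorphism of `{Im w = P}`: `Re(z - (1-ζ) P_z) = 0` identically. -/
theorem infinitesimal_autom_g_minus_one (z ζ : ℂ) (hζ : ‖ζ‖ < 1) :
    (z - (1 - ζ) * Pz z ζ ((starRingEnd ℂ) z) ((starRingEnd ℂ) ζ)).re = 0 := by
  have hnormSq : normSq ζ ≠ 1 := by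
    rw [normSq_eq_norm_sq]
    nlinarith [norm_nonneg ζ]
  rw [sub_re, re_one_sub_mul_Pz z ζ hnormSq, sub_self]
end

section
/- Consider the homological equations for weight-2 normalization: if λ, μ, ν are nonzero complex numbers with ν real, satisfying ν·P(z,ζ,\bar z,\bar ζ) = P(λz, μζ, \bar λ\bar z, \bar μ\bar ζ) for all z ∈ ℂ and |ζ| small, then writing λ = re^{iφ} with r > 0, one has μ = e^{2iφ} and ν = r^2. -/
open Complex

/-- if nonzero `λ, μ` and nonzero real `ν` satisfy
`ν·P(z,ζ,z̄,ζ̄) = P(λz, μζ, (starRingEnd ℂ)(λz), (starRingEnd ℂ)(μζ))` for all `z` and all `ζ` near `0`,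
then writing `λ = r e^{iφ}` with `r > 0`, one has `μ = e^{2iφ}` and `ν = r²`. -/
theorem weight_two_normalization (lam mu : ℂ) (nu : ℝ) (ε : ℝ)
    (hlam : lam ≠ 0) (hmu : mu ≠ 0) (hnu : nu ≠ 0) (hε : 0 < ε)
    (heq : ∀ z ζ : ℂ, ‖ζ‖ < ε → ‖mu * ζ‖ < 1 →
      (nu : ℂ) * P4 z ζ ((starRingEnd ℂ) z) ((starRingEnd ℂ) ζ)
        = P4 (lam * z) (mu * ζ) ((starRingEnd ℂ) (lam * z)) ((starRingEnd ℂ) (mu * ζ))) :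
    ∀ r φ : ℝ, 0 < r → lam = (r : ℂ) * Complex.exp (φ * I) →
      mu = Complex.exp (2 * φ * I) ∧ (nu : ℂ) = (r : ℂ) ^ 2 := by
  set δ : ℝ := min ε (min 1 (1 / ‖mu‖)) / 2 with hδdef
  have habs : 0 < ‖mu‖ := norm_pos_iff.mpr hmu
  have hδpos : 0 < δ := by
    have : 0 < min ε (min 1 (1 / ‖mu‖)) := lt_min hε (lt_min one_pos (by positivity))
    rw [hδdef]; linarith
  have hδε : δ < ε := by
    have : min ε (min 1 (1 / ‖mu‖)) ≤ ε := min_le_left _ _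
    nlinarith
  have hδ1 : δ < 1 := by
    have h1 : min ε (min 1 (1 / ‖mu‖)) ≤ 1 := (min_le_right _ _).trans (min_le_left _ _)
    nlinarith
  have hδμ : ‖mu‖ * δ < 1 := by
    have h1 : min ε (min 1 (1 / ‖mu‖)) ≤ 1 / ‖mu‖ :=
      (min_le_right _ _).trans (min_le_right _ _)
    have : ‖mu‖ * min ε (min 1 (1 / ‖mu‖)) ≤ 1 := by
      rw [← le_div_iff₀' habs]; exact h1
    nlinarith
  have hN : ((nu : ℂ)) ≠ 0 := Complex.ofReal_ne_zero.mpr hnu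
  -- nonzero denominators; abs facts
  have habshalf : ‖mu‖ * (δ/2) < 1 := by nlinarith
  have habsδ : ‖(δ:ℂ)‖ < ε := by rw [Complex.norm_real, Real.norm_eq_abs, abs_of_pos hδpos]; exact hδε
  have hone : ∀ w : ℂ, ‖w‖ < 1 → (1 : ℂ) - w ≠ 0 := by
    intro w hw h
    have : (1:ℂ) = w := by linear_combination h
    rw [← this] at hw; simp at hw
  have hs0 : ((δ:ℂ)) ≠ 0 := Complex.ofReal_ne_zero.mpr (ne_of_gt hδpos)
  have hd1 : (1:ℂ) - (δ:ℂ) * (δ:ℂ) ≠ 0 := by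
    apply hone; rw [norm_mul, Complex.norm_real, Real.norm_eq_abs, abs_of_pos hδpos]; nlinarith
  have hd1' : (1:ℂ) - (δ/2:ℝ) * (δ/2:ℝ) ≠ 0 := by
    apply hone
    rw [norm_mul, Complex.norm_real, Real.norm_eq_abs, abs_of_pos (by linarith : (0:ℝ) < δ/2)]; nlinarith
  have hd2 : (1:ℂ) - mu * (δ:ℂ) * ((starRingEnd ℂ) mu * (δ:ℂ)) ≠ 0 := by
    apply hone
    simp only [map_mul, norm_mul, Complex.norm_conj, Complex.norm_real, Real.norm_eq_abs, abs_of_pos hδpos]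
    nlinarith [mul_pos habs hδpos]
  have hd2' : (1:ℂ) - mu * ((δ/2:ℝ):ℂ) * ((starRingEnd ℂ) mu * ((δ/2:ℝ):ℂ)) ≠ 0 := by
    apply hone
    simp only [map_mul, norm_mul, Complex.norm_conj, Complex.norm_real, Real.norm_eq_abs,
      abs_of_pos (by linarith : (0:ℝ) < δ/2)]
    nlinarith [mul_pos habs (by linarith : (0:ℝ) < δ/2)]
  -- ζ = 0
  have h0 := heq 1 0 (by simpa using hε) (by simpa using one_pos)
  simp [P4] at h0
  -- ζ = δ
  have h1 := heq 1 (δ:ℂ) habsδ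
    (by rw [norm_mul, Complex.norm_real, Real.norm_eq_abs, abs_of_pos hδpos]; exact hδμ)
  simp only [P4, map_mul, Complex.conj_ofReal, map_one, mul_one, one_mul, one_pow] at h1
  rw [← mul_div_assoc, div_eq_div_iff hd1 hd2, ← h0] at h1
  -- ζ = δ/2
  have h2 := heq 1 ((δ/2:ℝ):ℂ)
    (by rw [Complex.norm_real, Real.norm_eq_abs, abs_of_pos (by linarith : (0:ℝ) < δ/2)]; linarith)
    (by rw [norm_mul, Complex.norm_real, Real.norm_eq_abs, abs_of_pos (by linarith : (0:ℝ) < δ/2)]; exact habshalf)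
  simp only [P4, map_mul, Complex.conj_ofReal, map_one, mul_one, one_mul, one_pow] at h2
  rw [← mul_div_assoc, div_eq_div_iff hd1' hd2', ← h0] at h2
  -- ζ = δ * I
  have h3 := heq 1 ((δ:ℂ) * I)
    (by rw [norm_mul, Complex.norm_I, mul_one]; exact habsδ)
    (by rw [norm_mul, norm_mul, Complex.norm_I, mul_one, Complex.norm_real, Real.norm_eq_abs, abs_of_pos hδpos]
        exact hδμ)
  simp only [P4, map_mul, Complex.conj_ofReal, Complex.conj_I, map_one, mul_one, one_mul,
    one_pow] at h3
  have hd3 : (1:ℂ) - (δ:ℂ) * I * ((δ:ℂ) * -I) ≠ 0 := by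
    apply hone
    simp only [map_mul, norm_mul, Complex.norm_real, Real.norm_eq_abs, Complex.norm_I, norm_neg, abs_of_pos hδpos,
      mul_one]
    nlinarith
  have hd4 : (1:ℂ) - mu * ((δ:ℂ) * I) * ((starRingEnd ℂ) mu * ((δ:ℂ) * -I)) ≠ 0 := by
    apply hone
    simp only [map_mul, norm_mul, Complex.norm_conj, Complex.norm_real, Real.norm_eq_abs, Complex.norm_I, norm_neg,
      abs_of_pos hδpos, mul_one]
    nlinarith [mul_pos habs hδpos]
  rw [← mul_div_assoc, div_eq_div_iff hd3 hd4, ← h0] at h3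
  -- extract linear relations
  set s : ℂ := (δ:ℂ) with hs
  have hcast : ((δ/2:ℝ):ℂ) = s / 2 := by push_cast; ring
  rw [hcast] at h2
  set N : ℂ := (nu:ℂ) with hNdef
  set a : ℂ := lam^2 * (starRingEnd ℂ) mu with ha
  set b : ℂ := ((starRingEnd ℂ) lam)^2 * mu with hb
  set M : ℂ := mu * (starRingEnd ℂ) mu with hM
  have f1 : ((N - (a+b)/2) + ((a+b)/2 - N*M) * s) * (s * (1+s)) = 0 := by
    linear_combination h1
  have f2 : ((N - (a+b)/2) + ((a+b)/2 - N*M) * (s/2)) * ((s/2) * (1+s/2)) = 0 := by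
    linear_combination h2
  have hs1 : (1:ℂ) + s ≠ 0 := by
    have : ((1 + δ : ℝ):ℂ) ≠ 0 := Complex.ofReal_ne_zero.mpr (by linarith)
    simpa using this
  have hs1' : (1:ℂ) + s/2 ≠ 0 := by
    have h' : ((1 + δ/2 : ℝ):ℂ) ≠ 0 := Complex.ofReal_ne_zero.mpr (by linarith)
    intro h; apply h'; rw [← h]; push_cast; ring
  have g1 : (N - (a+b)/2) + ((a+b)/2 - N*M) * s = 0 := by
    rcases mul_eq_zero.mp f1 with h | h
    · exact h
    · exact absurd h (mul_ne_zero hs0 hs1)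
  have g2 : (N - (a+b)/2) + ((a+b)/2 - N*M) * (s/2) = 0 := by
    rcases mul_eq_zero.mp f2 with h | h
    · exact h
    · exact absurd h (mul_ne_zero (by simpa using hs0) hs1')
  have hγ : (a+b)/2 - N*M = 0 := by
    have : ((a+b)/2 - N*M) * (s/2) = 0 := by linear_combination g1 - g2
    rcases mul_eq_zero.mp this with h | h
    · exact h
    · exact absurd h (by simpa using hs0)
  have hα : N - (a+b)/2 = 0 := by linear_combination g1 - s * hγ
  have hMN : N * M = N := by linear_combination -hα - hγ
  -- from h3 : d = 0, i.e. b = a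
  have f3 : (b - a) * (s * (1 - s^2)) = 0 := by
    linear_combination (2*I) * h3 + (2*I*s^2) * hMN + ((b-a)*s + (b-a)*s^3*(I^2-1) - 2*N*s^2*(M-1)*I) * Complex.I_sq
  have hba : b = a := by
    have hss : s * (1 - s^2) ≠ 0 := by
      apply mul_ne_zero hs0
      have : ((1 - δ^2 : ℝ):ℂ) ≠ 0 := Complex.ofReal_ne_zero.mpr (by nlinarith)
      push_cast at this; convert this using 1
    rcases mul_eq_zero.mp f3 with h | h
    · linear_combination h
    · exact absurd h hss
  have hNb : N = ((starRingEnd ℂ) lam)^2 * mu := by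
    linear_combination hα - (1/2 : ℂ) * hba
  intro r φ hr hl
  have hrc : ((r:ℂ)) ≠ 0 := Complex.ofReal_ne_zero.mpr (ne_of_gt hr)
  have hcl : (starRingEnd ℂ) lam = (r:ℂ) * Complex.exp ((φ:ℂ) * -I) := by
    rw [hl, map_mul, Complex.conj_ofReal, ← Complex.exp_conj, map_mul, Complex.conj_ofReal,
      Complex.conj_I]
  have he : Complex.exp ((φ:ℂ)*I) * Complex.exp ((φ:ℂ) * -I) = 1 := by
    rw [← Complex.exp_add, show (φ:ℂ)*I + (φ:ℂ)*(-I) = 0 by ring, Complex.exp_zero]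
  have hnu2 : N = (r:ℂ)^2 := by
    rw [h0, hcl, hl]; linear_combination ((r:ℂ)^2) * he
  have he2 : Complex.exp ((φ:ℂ)*-I)^2 * Complex.exp (2*(φ:ℂ)*I) = 1 := by
    rw [pow_two, ← Complex.exp_add, ← Complex.exp_add,
      show (φ:ℂ)*-I + (φ:ℂ)*-I + 2*(φ:ℂ)*I = 0 by ring, Complex.exp_zero]
  have h1' : (r:ℂ)^2 * (Complex.exp ((φ:ℂ)*-I)^2 * mu) = (r:ℂ)^2 * 1 := by
    rw [hcl] at hNb
    linear_combination hnu2 - hNb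
  have h2' := mul_left_cancel₀ (pow_ne_zero 2 hrc) h1'
  constructor
  · calc mu = (Complex.exp ((φ:ℂ)*-I)^2 * Complex.exp (2*(φ:ℂ)*I)) * mu := by
          rw [he2, one_mul]
      _ = Complex.exp (2*(φ:ℂ)*I) * (Complex.exp ((φ:ℂ)*-I)^2 * mu) := by ring
      _ = Complex.exp (2*(φ:ℂ)*I) := by rw [h2', mul_one]
  · exact hnu2
end
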